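/- The temporally-extended optimality operator T_J defined by (T_J V)(s) := max_{a, 1 ≤ j ≤ J} [ Σ_{k=0}^{j-1} γ^k r(s_k, a) + γ^j V(s_j) ] is a γ-contraction in the supremum norm on the space of bounded functions V : S → ℝ, for any J ≥ 1 and γ ∈ [0,1). -/

import Mathlib

/-!
Taking a maximum is `1`-Lipschitz in the sup norm: if two families differ pointwise by at most
`c`, so do their maxima. The candidate values of `T_J V s` and `T_J W s` for the same action `a`
and horizon `j` share the reward sum and differ only in the bootstrap term, by
`γ ^ j |V s_j - W s_j| ≤ γ ‖V - W‖` because `j ≥ 1` and `γ ≤ 1`.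
-/

namespace Finset

variable {ι α : Type*} [LinearOrder α] [AddCommGroup α] [IsOrderedAddMonoid α]

theorem sup'_le_sup'_add {s : Finset ι} (H : s.Nonempty) {f g : ι → α} {c : α}
    (h : ∀ i ∈ s, f i - g i ≤ c) : s.sup' H f ≤ s.sup' H g + c :=
  sup'_le H f fun i hi => calc
    f i ≤ g i + c := sub_le_iff_le_add'.mp (h i hi)
    _ ≤ s.sup' H g + c := add_le_add_left (le_sup' g hi) c

theorem abs_sup'_sub_sup'_le {s : Finset ι} (H : s.Nonempty) {f g : ι → α} {c : α}
    (h : ∀ i ∈ s, |f i - g i| ≤ c) : |s.sup' H f - s.sup' H g| ≤ c := by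
  rw [abs_sub_le_iff]
  constructor
  · exact sub_le_iff_le_add'.mpr <| sup'_le_sup'_add H fun i hi => (abs_sub_le_iff.mp (h i hi)).1
  · exact sub_le_iff_le_add'.mpr <| sup'_le_sup'_add H fun i hi => (abs_sub_le_iff.mp (h i hi)).2

end Finset

theorem abs_add_pow_mul_sub_add_pow_mul_le {γ x y M : ℝ} {j : ℕ} (c : ℝ) (hγ0 : 0 ≤ γ)
    (hγ1 : γ ≤ 1) (hj : 1 ≤ j) (hxy : |x - y| ≤ M) :
    |(c + γ ^ j * x) - (c + γ ^ j * y)| ≤ γ * M := by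
  have hM : 0 ≤ M := (abs_nonneg _).trans hxy
  calc |(c + γ ^ j * x) - (c + γ ^ j * y)| = γ ^ j * |x - y| := by
        rw [add_sub_add_left_eq_sub, ← mul_sub, abs_mul, abs_of_nonneg (pow_nonneg hγ0 j)]
    _ ≤ γ ^ j * M := mul_le_mul_of_nonneg_left hxy (pow_nonneg hγ0 j)
    _ ≤ γ * M := mul_le_mul_of_nonneg_right (pow_le_of_le_one hγ0 hγ1 (by omega)) hM

/-- The temporally-extended optimality operator `T_J` is a `γ`-contraction in
the supremum norm: `max_s |T_J V (s) − T_J W (s)| ≤ γ · max_s |V(s) − W(s)|`. -/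
theorem extended_operator_contraction (S A : Type*) [Fintype S] [Fintype A]
    [Nonempty S] [Nonempty A]
    (P : S → A → S) (r : S → A → ℝ) (γ : ℝ) (hγ0 : 0 ≤ γ) (hγ1 : γ < 1)
    (J : ℕ) (hJ : 1 ≤ J)
    (TJ : (S → ℝ) → S → ℝ)
    (hT : ∀ V s, TJ V s =
      ((Finset.univ : Finset A) ×ˢ Finset.Icc 1 J).sup'
        (Finset.Nonempty.product Finset.univ_nonempty
          (Finset.nonempty_Icc.mpr hJ))
        (fun p => (∑ k ∈ Finset.range p.2, γ ^ k * r ((fun x => P x p.1)^[k] s) p.1) +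
          γ ^ p.2 * V ((fun x => P x p.1)^[p.2] s))) :
    ∀ V W : S → ℝ,
      Finset.univ.sup' Finset.univ_nonempty (fun s => |TJ V s - TJ W s|) ≤
        γ * Finset.univ.sup' Finset.univ_nonempty (fun s => |V s - W s|) := by
  intro V W
  refine Finset.sup'_le _ _ fun s _ => ?_
  rw [hT, hT]
  refine Finset.abs_sup'_sub_sup'_le _ fun p hp => ?_
  have hj : 1 ≤ p.2 := (Finset.mem_Icc.mp (Finset.mem_product.mp hp).2).1
  exact abs_add_pow_mul_sub_add_pow_mul_le _ hγ0 hγ1.le hj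
    (Finset.le_sup' (fun s => |V s - W s|) (Finset.mem_univ _))
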